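/- arXiv:0803.0999 — 3 statements merged into one kernel-verified Lean document; each statement's English description precedes it below -/
import Mathlib

section
/- For any t₁,...,tₙ ∈ [0,1], the maximum over all probability measures P on [0,1] of ∫ ∏ⱼ (1 - T(i,tⱼ)) dP(i), taken over measurable T : [0,1]×[0,1] → [0,1] satisfying ∫ T(i,t)dP(i) = t for each t (consistency with in-transmissibility) and monotone ordering in i, equals minⱼ(1 - tⱼ), achieved by the threshold function T(i,t) = 1{i < t} with P uniform on [0,1]. -/
open MeasureTheory intervalIntegral

/-
The bound holds factor by factor: every factor `1 - T(i, tⱼ)` lies in `[0, 1]`, so the product is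
at most its `j`-th factor, whose `P`-integral is `1 - tⱼ` by consistency. For the threshold function
the product is the indicator of `i ≥ maxⱼ tⱼ`, whose integral over `[0, 1]` is `1 - maxⱼ tⱼ`.
-/

theorem Finset.inf'_sub_left {ι α : Type*} [AddCommGroup α] [LinearOrder α] [IsOrderedAddMonoid α]
    {s : Finset ι} (hs : s.Nonempty) (f : ι → α) (a : α) :
    s.inf' hs (fun j => a - f j) = a - s.sup' hs f := by
  obtain ⟨j, hj, hmax⟩ := s.exists_mem_eq_sup' hs f
  exact le_antisymm (hmax ▸ s.inf'_le _ hj)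
    (s.le_inf' hs _ fun k hk => sub_le_sub_left (s.le_sup' f hk) a)

theorem Finset.prod_le_of_forall_mem_Icc {ι R : Type*} [CommMonoidWithZero R] [PartialOrder R]
    [ZeroLEOneClass R] [PosMulMono R] {s : Finset ι} {f : ι → R}
    (hf : ∀ k ∈ s, f k ∈ Set.Icc (0 : R) 1) {j : ι} (hj : j ∈ s) :
    ∏ k ∈ s, f k ≤ f j := by
  classical
  rw [← s.mul_prod_erase f hj]
  exact mul_le_of_le_one_right (hf j hj).1 <|
    prod_le_one (fun k hk => (hf k (mem_of_mem_erase hk)).1)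
      (fun k hk => (hf k (mem_of_mem_erase hk)).2)

theorem integral_prod_one_sub_le_inf' {α ι : Type*} [MeasurableSpace α] {μ : Measure α}
    [IsProbabilityMeasure μ] {s : Finset ι} (hs : s.Nonempty) {f : ι → α → ℝ}
    (hf : ∀ j x, f j x ∈ Set.Icc (0 : ℝ) 1) (hf_int : ∀ j, Integrable (f j) μ)
    (hprod_int : Integrable (fun x => ∏ j ∈ s, (1 - f j x)) μ) :
    ∫ x, ∏ j ∈ s, (1 - f j x) ∂μ ≤ s.inf' hs (fun j => 1 - ∫ x, f j x ∂μ) := by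
  refine s.le_inf' hs _ fun j hj => ?_
  have hfactor : ∀ x, ∏ k ∈ s, (1 - f k x) ≤ 1 - f j x := fun x =>
    s.prod_le_of_forall_mem_Icc (fun k _ => ⟨by linarith [(hf k x).2], by linarith [(hf k x).1]⟩) hj
  calc ∫ x, ∏ k ∈ s, (1 - f k x) ∂μ ≤ ∫ x, (1 - f j x) ∂μ :=
        integral_mono hprod_int ((integrable_const 1).sub (hf_int j)) hfactor
    _ = 1 - ∫ x, f j x ∂μ := by
        rw [integral_sub (integrable_const 1) (hf_int j), MeasureTheory.integral_const, probReal_univ, one_smul]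

theorem prod_one_sub_ite_lt_eq_indicator {ι : Type*} {s : Finset ι} (hs : s.Nonempty)
    (t : ι → ℝ) (x : ℝ) :
    ∏ j ∈ s, (1 - if x < t j then (1 : ℝ) else 0) = (Set.Ici (s.sup' hs t)).indicator 1 x := by
  by_cases hx : x < s.sup' hs t
  · obtain ⟨j, hj, hxj⟩ := (s.lt_sup'_iff hs).mp hx
    rw [Set.indicator_of_notMem (by simpa using hx)]
    exact Finset.prod_eq_zero hj (by simp [hxj])
  · rw [Set.indicator_of_mem (by simpa using hx)]
    refine Finset.prod_eq_one fun j hj => ?_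
    simp [(not_lt.mp hx).trans' (s.le_sup' t hj) |>.not_gt]

theorem integral_indicator_Ici_of_mem_unitInterval {a : ℝ} (ha : a ∈ Set.Icc (0 : ℝ) 1) :
    ∫ x in (0 : ℝ)..1, (Set.Ici a).indicator 1 x = 1 - a := by
  have hinter : Set.Ici a ∩ Set.Icc 0 1 = Set.Icc a 1 := by
    ext x
    simp only [Set.mem_inter_iff, Set.mem_Ici, Set.mem_Icc]
    exact ⟨fun h => ⟨h.1, h.2.2⟩, fun h => ⟨h.1, ha.1.trans h.1, h.2⟩⟩
  rw [integral_of_le zero_le_one, ← integral_Icc_eq_integral_Ioc,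
    integral_indicator_one measurableSet_Ici, measureReal_restrict_apply measurableSet_Ici,
    hinter, Real.volume_real_Icc_of_le ha.2]

/-- Theorem 3.4 / 4.5: among all infectiousness distributions `P` and ordered
transmission functions `T` consistent with the in-transmissibilities `tⱼ`,
the escape probability `∫ ∏ⱼ (1 - T(i,tⱼ)) dP(i)` is at most
`minⱼ (1 - tⱼ)`, and this bound is attained by the threshold function
`T(i,t) = 1{i < t}` with `P` uniform on `[0,1]`. -/
theorem escape_probability_max
    (n : ℕ) (hn : 0 < n) (t : Fin n → ℝ)
    (ht : ∀ j, t j ∈ Set.Icc (0:ℝ) 1) :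
    (∀ (P : Measure ℝ), IsProbabilityMeasure P →
      ∀ (T : ℝ → ℝ → ℝ), Measurable (Function.uncurry T) →
      (∀ i s, T i s ∈ Set.Icc (0:ℝ) 1) →
      -- consistency with in-transmissibility
      (∀ j, ∫ i, T i (t j) ∂P = t j) →
      -- ordering assumption
      (∀ i₁ i₂, (∃ s₀, T i₂ s₀ < T i₁ s₀) → ∀ s, T i₂ s ≤ T i₁ s) →
      (∀ j, Integrable (fun i => T i (t j)) P) →
      Integrable (fun i => ∏ j, (1 - T i (t j))) P →
      ∫ i, ∏ j, (1 - T i (t j)) ∂P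
        ≤ Finset.univ.inf' (Finset.univ_nonempty_iff.mpr ⟨⟨0, hn⟩⟩)
            (fun j => 1 - t j)) ∧
    (∫ i in (0:ℝ)..1, ∏ j, (1 - if i < t j then (1:ℝ) else 0)
        = Finset.univ.inf' (Finset.univ_nonempty_iff.mpr ⟨⟨0, hn⟩⟩)
            (fun j => 1 - t j)) := by
  have hne : (Finset.univ : Finset (Fin n)).Nonempty := Finset.univ_nonempty_iff.mpr ⟨⟨0, hn⟩⟩
  refine ⟨fun P _ T _ hT hcons _ hT_int hprod_int => ?_, ?_⟩
  · simpa only [hcons] using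
      integral_prod_one_sub_le_inf' hne (f := fun j i => T i (t j)) (fun j i => hT i (t j))
        hT_int hprod_int
  · have hmax : Finset.univ.sup' hne t ∈ Set.Icc (0 : ℝ) 1 := by
      obtain ⟨j, -, hj⟩ := Finset.univ.exists_mem_eq_sup' hne t
      exact hj ▸ ht j
    simp_rw [prod_one_sub_ite_lt_eq_indicator hne, integral_indicator_Ici_of_mem_unitInterval hmax,
      Finset.inf'_sub_left]
end

section
/- If a random pair (T_out, T_in) arises from independent infectiousness and susceptibility via T_out(i)=∫T(i,s)dP(s), T_in(s)=∫T(i,s)dP(i), and T_in is maximally heterogeneous, i.e. T_in ∈ {0,1} almost surely with P(T_in=1)=⟨T⟩, then T_out = ⟨T⟩ almost surely. -/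
/-!
Since `0 ≤ T ≤ 1`, a section `T(·, s)` whose mean `T_in(s)` is `0` or `1` is a.e. equal to that
mean. Exchanging the two almost-everywhere quantifiers (Fubini for null sets) gives, for a.e. `i`,
`T(i, ·) = T_in` `ν`-a.e., hence `T_out(i) = ∫ T_in dν = ν(T_in = 1)`.
-/

open MeasureTheory

namespace MeasureTheory

variable {α : Type*} [MeasurableSpace α] {μ : Measure α}

theorem ae_eq_one_of_integral_eq_one [IsProbabilityMeasure μ] {f : α → ℝ}
    (hf : ∀ᵐ x ∂μ, f x ≤ 1) (hfi : Integrable f μ) (h : ∫ x, f x ∂μ = 1) :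
    ∀ᵐ x ∂μ, f x = 1 := by
  have hgap_nonneg : 0 ≤ᵐ[μ] fun x => 1 - f x := by
    filter_upwards [hf] with x hx using sub_nonneg.mpr hx
  have hgap_int : Integrable (fun x => 1 - f x) μ := (integrable_const 1).sub hfi
  have hgap_zero : ∫ x, (1 - f x) ∂μ = 0 := by
    rw [integral_sub (integrable_const 1) hfi, h, integral_const, probReal_univ, one_smul,
      sub_self]
  filter_upwards [(integral_eq_zero_iff_of_nonneg_ae hgap_nonneg hgap_int).mp hgap_zero]
    with x hx
  exact (sub_eq_zero.mp hx).symm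

theorem ae_eq_integral_of_integral_eq_zero_or_one [IsProbabilityMeasure μ] {f : α → ℝ}
    (hf : ∀ᵐ x ∂μ, f x ∈ Set.Icc (0 : ℝ) 1) (hfi : Integrable f μ)
    (h : ∫ x, f x ∂μ = 0 ∨ ∫ x, f x ∂μ = 1) :
    ∀ᵐ x ∂μ, f x = ∫ y, f y ∂μ := by
  rcases h with h0 | h1
  · have hf_nonneg : 0 ≤ᵐ[μ] f := by filter_upwards [hf] with x hx using hx.1
    filter_upwards [(integral_eq_zero_iff_of_nonneg_ae hf_nonneg hfi).mp h0] with x hx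
    rw [hx, h0, Pi.zero_apply]
  · have hf_le : ∀ᵐ x ∂μ, f x ≤ 1 := by filter_upwards [hf] with x hx using hx.2
    filter_upwards [ae_eq_one_of_integral_eq_one hf_le hfi h1] with x hx
    rw [hx, h1]

theorem integral_eq_measure_eq_one_of_ae_eq_zero_or_one {g : α → ℝ} (hg : Measurable g)
    (h01 : ∀ᵐ x ∂μ, g x = 0 ∨ g x = 1) :
    ∫ x, g x ∂μ = μ.real {x | g x = 1} := by
  have hA : MeasurableSet {x | g x = 1} := hg (measurableSet_singleton 1)
  rw [← integral_indicator_one hA]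
  refine integral_congr_ae ?_
  filter_upwards [h01] with x hx
  rcases hx with hx | hx <;> simp [Set.indicator, hx]

end MeasureTheory

theorem maximally_heterogeneous_Tin_forces_homogeneous_Tout_general
    {I S : Type*} [MeasurableSpace I] [MeasurableSpace S]
    (μ : Measure I) (ν : Measure S)
    [IsProbabilityMeasure μ] [IsProbabilityMeasure ν]
    (T : I × S → ℝ)
    (hT_meas : Measurable T)
    (hT01 : ∀ p, T p ∈ Set.Icc (0:ℝ) 1)
    (Tavg : ℝ)
    (hhet : ∀ᵐ s ∂ν, (∫ i, T (i, s) ∂μ = 0) ∨ (∫ i, T (i, s) ∂μ = 1))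
    (hTavg : (ν {s | ∫ i, T (i, s) ∂μ = 1}).toReal = Tavg) :
    ∀ᵐ i ∂μ, ∫ s, T (i, s) ∂ν = Tavg := by
  set Tin : S → ℝ := fun s => ∫ i, T (i, s) ∂μ
  have hTin_meas : Measurable Tin := hT_meas.stronglyMeasurable.integral_prod_left'.measurable
  have hT_section_int (s : S) : Integrable (fun i => T (i, s)) μ :=
    Integrable.of_bound (hT_meas.comp measurable_prodMk_right).aestronglyMeasurable 1
      (ae_of_all _ fun i => by rw [Real.norm_of_nonneg (hT01 _).1]; exact (hT01 _).2)
  have hT_eq_Tin : ∀ᵐ s ∂ν, ∀ᵐ i ∂μ, T (i, s) = Tin s := by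
    filter_upwards [hhet] with s hs
    exact ae_eq_integral_of_integral_eq_zero_or_one (ae_of_all _ fun i => hT01 _)
      (hT_section_int s) hs
  have hT_eq_Tin_swapped : ∀ᵐ i ∂μ, ∀ᵐ s ∂ν, T (i, s) = Tin s :=
    (Measure.ae_ae_comm (p := fun i s => T (i, s) = Tin s)
      (measurableSet_eq_fun hT_meas (hTin_meas.comp measurable_snd))).mpr hT_eq_Tin
  rw [← hTavg, ← measureReal_def,
    ← integral_eq_measure_eq_one_of_ae_eq_zero_or_one hTin_meas hhet]
  filter_upwards [hT_eq_Tin_swapped] with i hi using integral_congr_ae hi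

/-- If the in-transmissibility is maximally heterogeneous
(`T_in ∈ {0,1}` a.s. with `P(T_in = 1) = ⟨T⟩`), then the out-transmissibility
is almost surely homogeneous: `T_out = ⟨T⟩` a.e. -/
theorem maximally_heterogeneous_Tin_forces_homogeneous_Tout
    {I S : Type*} [MeasurableSpace I] [MeasurableSpace S]
    (μ : Measure I) (ν : Measure S)
    [IsProbabilityMeasure μ] [IsProbabilityMeasure ν] [SFinite ν]
    (T : I × S → ℝ)
    (hT_meas : Measurable T)
    (hT01 : ∀ p, T p ∈ Set.Icc (0:ℝ) 1)
    (hint : Integrable T (μ.prod ν))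
    (Tavg : ℝ)
    (hhet : ∀ᵐ s ∂ν, (∫ i, T (i, s) ∂μ = 0) ∨ (∫ i, T (i, s) ∂μ = 1))
    (hTavg : (ν {s | ∫ i, T (i, s) ∂μ = 1}).toReal = Tavg) :
    ∀ᵐ i ∂μ, ∫ s, T (i, s) ∂ν = Tavg :=
  maximally_heterogeneous_Tin_forces_homogeneous_Tout_general μ ν T hT_meas hT01 Tavg hhet hTavg
end

section
/- If the transmission function satisfies the ordering assumption, then the map i ↦ T_out(i) is injective on equivalence classes: T_out(i₁) = T_out(i₂) implies T(i₁,s) = T(i₂,s) for P(𝓢)-almost every s. -/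
open MeasureTheory

theorem measure_setOf_lt_eq_zero_of_integral_eq {α : Type*} [MeasurableSpace α]
    {μ : Measure α} {f g : α → ℝ} (hf : Integrable f μ) (hg : Integrable g μ)
    (hfg : f ≤ᵐ[μ] g) (h : ∫ a, f a ∂μ = ∫ a, g a ∂μ) :
    μ {a | f a < g a} = 0 :=
  measure_mono_null (fun _ ha => ha.ne) (ae_iff.mp ((integral_eq_iff_of_ae_le hf hg hfg).mp h))

theorem ordering_Tout_injective_general
    {I S : Type*} [MeasurableSpace S]
    (ν : Measure S)
    (T : I → S → ℝ)
    (hint : ∀ i, Integrable (T i) ν)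
    -- ordering assumption
    (horder : ∀ i₁ i₂, (∃ s₀, T i₂ s₀ < T i₁ s₀) →
      (∀ s, T i₂ s ≤ T i₁ s) ∧ 0 < ν {s | T i₂ s < T i₁ s})
    (i₁ i₂ : I)
    (hout : ∫ s, T i₁ s ∂ν = ∫ s, T i₂ s ∂ν) :
    ∀ᵐ s ∂ν, T i₁ s = T i₂ s := by
  have le_of_integral_eq : ∀ i j, ∫ s, T i s ∂ν = ∫ s, T j s ∂ν → ∀ s, T i s ≤ T j s := by
    intro i j h s
    by_contra! hlt
    obtain ⟨hle, hpos⟩ := horder i j ⟨s, hlt⟩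
    exact hpos.ne' (measure_setOf_lt_eq_zero_of_integral_eq (hint j) (hint i)
      (.of_forall hle) h.symm)
  exact .of_forall fun s =>
    le_antisymm (le_of_integral_eq i₁ i₂ hout s) (le_of_integral_eq i₂ i₁ hout.symm s)

/-- Under the ordering assumption, equal out-transmissibilities force almost
everywhere equal transmission profiles: `T_out(i₁) = T_out(i₂)` implies
`T(i₁,s) = T(i₂,s)` for `P(𝓢)`-a.e. `s`. -/
theorem ordering_Tout_injective
    {I S : Type*} [MeasurableSpace S]
    (ν : Measure S) [IsProbabilityMeasure ν]
    (T : I → S → ℝ)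
    (hT01 : ∀ i s, T i s ∈ Set.Icc (0:ℝ) 1)
    (hmeas : ∀ i, Measurable (T i))
    (hint : ∀ i, Integrable (T i) ν)
    -- ordering assumption
    (horder : ∀ i₁ i₂, (∃ s₀, T i₂ s₀ < T i₁ s₀) →
      (∀ s, T i₂ s ≤ T i₁ s) ∧ 0 < ν {s | T i₂ s < T i₁ s})
    (i₁ i₂ : I)
    (hout : ∫ s, T i₁ s ∂ν = ∫ s, T i₂ s ∂ν) :
    ∀ᵐ s ∂ν, T i₁ s = T i₂ s :=
  ordering_Tout_injective_general ν T hint horder i₁ i₂ hout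
end
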